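/- arXiv:2406.18446 — 2 statements merged into one kernel-verified Lean document; each statement's English description precedes it below -/
import Mathlib

section
/- Let ω and ν be radial weights in D. Then the product ω·ν̂ is a radial weight in D, and there exist constants 0 < c₁ ≤ c₂ such that c₁ ω̂(r) ν̂(r) ≤ ∫_r^1 ω(s) ν̂(s) ds ≤ c₂ ω̂(r) ν̂(r) for all 0 ≤ r < 1. -/
open MeasureTheory Set Complex
open scoped ENNReal

noncomputable section

/-- The open unit disc in the complex plane. -/
def unitDisc : Set ℂ := Metric.ball 0 1

/-- Tail integral `ω̂(r) = ∫_r^1 ω(s) ds`. -/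
def tl (ω : ℝ → ℝ) (r : ℝ) : ℝ := ∫ s in r..1, ω s

/-- Moment `ω_x = ∫_0^1 s^x ω(s) ds` (real power in the exponent). -/
def mom (ω : ℝ → ℝ) (x : ℝ) : ℝ := ∫ s in (0:ℝ)..1, s ^ x * ω s

/-- `ω` is a radial weight: nonnegative and integrable on `[0,1)`, with positive
tail integrals. -/
def IsRadialWeight (ω : ℝ → ℝ) : Prop :=
  (∀ s ∈ Ico (0:ℝ) 1, 0 ≤ ω s) ∧ IntegrableOn ω (Ico (0:ℝ) 1) ∧
    ∀ r ∈ Ico (0:ℝ) 1, 0 < tl ω r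

/-- The upper doubling class `D̂`: `sup_{0≤r<1} ω̂(r)/ω̂((1+r)/2) < ∞`. -/
def Dhat (ω : ℝ → ℝ) : Prop :=
  ∃ C : ℝ, ∀ r ∈ Ico (0:ℝ) 1, tl ω r ≤ C * tl ω ((1 + r) / 2)

/-- The class `Ď`: there are `K > 1`, `C > 1` with `ω̂(r) ≥ C ω̂(1 - (1-r)/K)`. -/
def Dcheck (ω : ℝ → ℝ) : Prop :=
  ∃ K C : ℝ, 1 < K ∧ 1 < C ∧ ∀ r ∈ Ico (0:ℝ) 1, C * tl ω (1 - (1 - r) / K) ≤ tl ω r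

/-- The class `D = D̂ ∩ Ď`. -/
def DD (ω : ℝ → ℝ) : Prop := Dhat ω ∧ Dcheck ω

/-- The Bergman reproducing kernel `B^ω_z(ζ) = Σ_n (conj z · ζ)^n / (2 ω_{2n+1})`. -/
def bKer (ω : ℝ → ℝ) (z ζ : ℂ) : ℂ :=
  ∑' n : ℕ, (starRingEnd ℂ z * ζ) ^ n / ((2 * mom ω (2 * (n : ℝ) + 1) : ℝ) : ℂ)

/-- The integrand of the Bergman projection. -/
def bInt (ω : ℝ → ℝ) (f : ℂ → ℂ) (z ζ : ℂ) : ℂ :=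
  f ζ * starRingEnd ℂ (bKer ω z ζ) * ((ω ‖ζ‖ : ℝ) : ℂ)

/-- The Bergman projection `P_ω f(z) = ∫_𝔻 f(ζ) conj(B^ω_z(ζ)) ω(ζ) dA(ζ)`,
where `dA` is normalized area measure `dx dy / π`. -/
def bProj (ω : ℝ → ℝ) (f : ℂ → ℂ) (z : ℂ) : ℂ :=
  (Real.pi : ℂ)⁻¹ * ∫ ζ in unitDisc, bInt ω f z ζ

/-- The weighted sup-norm `ess sup_{z ∈ 𝔻} |f(z)| v(|z|)`, valued in `ℝ≥0∞`. -/
def wSup (v : ℝ → ℝ) (f : ℂ → ℂ) : ℝ≥0∞ :=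
  essSup (fun z => ENNReal.ofReal (‖f z‖ * v ‖z‖)) (volume.restrict unitDisc)

/-- `P_ω : L^∞_v → H^∞_v` is bounded: there is `C > 0` so that for every
`f ∈ L^∞_v` the defining integral converges absolutely at every point of `𝔻`,
`P_ω f` is analytic on `𝔻`, and `‖P_ω f‖_{L^∞_v} ≤ C ‖f‖_{L^∞_v}`. -/
def ProjBddH (ω v : ℝ → ℝ) : Prop :=
  ∃ C : ℝ, 0 < C ∧ ∀ f : ℂ → ℂ,
    AEStronglyMeasurable f (volume.restrict unitDisc) → wSup v f < ⊤ →
    (∀ z ∈ unitDisc, IntegrableOn (bInt ω f z) unitDisc) ∧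
    DifferentiableOn ℂ (bProj ω f) unitDisc ∧
    wSup v (bProj ω f) ≤ ENNReal.ofReal C * wSup v f

/-- `P_ω : L^∞_v → B^∞_v` is bounded: there is `C > 0` so that for every
`f ∈ L^∞_v` the defining integral converges absolutely at every point of `𝔻`,
`P_ω f` is analytic on `𝔻`, and `‖P_ω f‖_{B^∞_v} ≤ C ‖f‖_{L^∞_v}`. -/
def ProjBddB (ω v : ℝ → ℝ) : Prop :=
  ∃ C : ℝ, 0 < C ∧ ∀ f : ℂ → ℂ,
    AEStronglyMeasurable f (volume.restrict unitDisc) → wSup v f < ⊤ →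
    (∀ z ∈ unitDisc, IntegrableOn (bInt ω f z) unitDisc) ∧
    DifferentiableOn ℂ (bProj ω f) unitDisc ∧
    ∀ z ∈ unitDisc,
      ENNReal.ofReal ((1 - ‖z‖) * v ‖z‖ * ‖deriv (bProj ω f) z‖) ≤
        ENNReal.ofReal C * wSup v f

/-- The moment condition `sup_{x ≥ 0} (ν_x / ω_{2x}) (ω/ν̂)_x < ∞`. -/
def MomCond (ω ν : ℝ → ℝ) : Prop :=
  ∃ C : ℝ, ∀ x : ℝ, 0 ≤ x →
    mom ν x / mom ω (2 * x) * mom (fun s => ω s / tl ν s) x ≤ C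

/-- The tail condition `sup_{0 ≤ r < 1} (ν̂(r)/ω̂(r)) ∫_r^1 ω(s)/ν̂(s) ds < ∞`. -/
def TailCond (ω ν : ℝ → ℝ) : Prop :=
  ∃ C : ℝ, ∀ r ∈ Ico (0:ℝ) 1, tl ν r / tl ω r * tl (fun s => ω s / tl ν s) r ≤ C

lemma rw_ii {ω : ℝ → ℝ} (hω : IntegrableOn ω (Ico (0:ℝ) 1)) {a b : ℝ} (ha : 0 ≤ a) (ha1 : a ≤ 1)
    (hb : 0 ≤ b) (hb1 : b ≤ 1) : IntervalIntegrable ω volume a b := by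
  have h1 : IntegrableOn ω (Icc (0:ℝ) 1) := by
    rw [integrableOn_Icc_iff_integrableOn_Ico]; exact hω
  exact (h1.mono_set (uIcc_subset_Icc ⟨ha, ha1⟩ ⟨hb, hb1⟩)).intervalIntegrable

lemma ae_ne_one {a b : ℝ} : ∀ᵐ x ∂(volume.restrict (Icc a b)), x ≠ 1 := by
  have h0 : ∀ᵐ (x:ℝ) ∂volume, x ≠ 1 := by refine ae_iff.mpr ?_; simp
  exact ae_restrict_of_ae h0

lemma ae_mem_Icc {a b : ℝ} : ∀ᵐ x ∂(volume.restrict (Icc a b)), x ∈ Icc a b :=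
  (ae_restrict_iff' measurableSet_Icc).2 (ae_of_all _ (fun x hx => hx))

lemma rw_int_nonneg {ω : ℝ → ℝ} (h0 : ∀ s ∈ Ico (0:ℝ) 1, 0 ≤ ω s) {a b : ℝ} (ha : 0 ≤ a)
    (hab : a ≤ b) (hb1 : b ≤ 1) : 0 ≤ ∫ s in a..b, ω s := by
  apply intervalIntegral.integral_nonneg_of_ae_restrict hab
  filter_upwards [ae_ne_one, ae_mem_Icc] with x hx hx2
  exact h0 x ⟨le_trans ha hx2.1, lt_of_le_of_ne (le_trans hx2.2 hb1) hx⟩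

lemma tl_split {ω : ℝ → ℝ} (hω : IntegrableOn ω (Ico (0:ℝ) 1)) {a b : ℝ} (ha : 0 ≤ a)
    (hab : a ≤ b) (hb1 : b ≤ 1) : tl ω a = (∫ s in a..b, ω s) + tl ω b := by
  unfold tl
  rw [intervalIntegral.integral_add_adjacent_intervals
    (rw_ii hω ha (le_trans hab hb1) (le_trans ha hab) hb1)
    (rw_ii hω (le_trans ha hab) hb1 zero_le_one le_rfl)]

lemma tl_anti {ω : ℝ → ℝ} (h0 : ∀ s ∈ Ico (0:ℝ) 1, 0 ≤ ω s)
    (hω : IntegrableOn ω (Ico (0:ℝ) 1)) {a b : ℝ} (ha : 0 ≤ a) (hab : a ≤ b)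
    (hb1 : b ≤ 1) : tl ω b ≤ tl ω a := by
  rw [tl_split hω ha hab hb1]
  linarith [rw_int_nonneg h0 ha hab hb1]

lemma tl_nonneg {ω : ℝ → ℝ} (h0 : ∀ s ∈ Ico (0:ℝ) 1, 0 ≤ ω s)
    (hω : IntegrableOn ω (Ico (0:ℝ) 1)) {a : ℝ} (ha : 0 ≤ a) (ha1 : a ≤ 1) :
    0 ≤ tl ω a := by
  have := tl_anti h0 hω ha ha1 le_rfl
  simpa [tl] using this

/-- clamped tail, globally antitone -/
def tlc (ν : ℝ → ℝ) (s : ℝ) : ℝ := tl ν (min 1 (max 0 s))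

lemma tlc_anti {ν : ℝ → ℝ} (hν : IsRadialWeight ν) : Antitone (tlc ν) := by
  intro s t hst
  unfold tlc
  apply tl_anti hν.1 hν.2.1 (le_min zero_le_one (le_max_left 0 s))
    (min_le_min le_rfl (max_le_max le_rfl hst)) (min_le_left 1 _)

lemma tlc_eq {ν : ℝ → ℝ} {s : ℝ} (h0 : 0 ≤ s) (h1 : s ≤ 1) : tlc ν s = tl ν s := by
  unfold tlc
  rw [max_eq_right h0, min_eq_right h1]

lemma P_integrable {ω ν : ℝ → ℝ} (hω : IsRadialWeight ω) (hν : IsRadialWeight ν) :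
    IntegrableOn (fun s => ω s * tl ν s) (Ico (0:ℝ) 1) := by
  have heq : EqOn (fun s => ω s * tl ν s) (fun s => ω s * tlc ν s) (Ico (0:ℝ) 1) := by
    intro s hs; simp [tlc_eq hs.1 hs.2.le]
  rw [integrableOn_congr_fun heq measurableSet_Ico]
  have hmeas : AEStronglyMeasurable (fun s => ω s * tlc ν s) (volume.restrict (Ico (0:ℝ) 1)) :=
    hω.2.1.aestronglyMeasurable.mul ((tlc_anti hν).measurable.aestronglyMeasurable.restrict)
  apply Integrable.mono (hω.2.1.const_mul (tl ν 0)) hmeas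
  refine (ae_restrict_iff' measurableSet_Ico).2 (ae_of_all _ (fun x hx => ?_))
  have h1 : 0 ≤ ω x := hω.1 x hx
  have h2 : 0 ≤ tlc ν x := by
    rw [tlc_eq hx.1 hx.2.le]; exact tl_nonneg hν.1 hν.2.1 hx.1 hx.2.le
  have h3 : tlc ν x ≤ tl ν 0 := by
    rw [tlc_eq hx.1 hx.2.le]; exact tl_anti hν.1 hν.2.1 le_rfl hx.1 hx.2.le
  rw [Real.norm_eq_abs, Real.norm_eq_abs, _root_.abs_of_nonneg (mul_nonneg h1 h2)]
  calc ω x * tlc ν x ≤ ω x * tl ν 0 := by nlinarith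
    _ ≤ |tl ν 0 * ω x| := by rw [mul_comm]; exact le_abs_self _

lemma P_nonneg {ω ν : ℝ → ℝ} (hω : IsRadialWeight ω) (hν : IsRadialWeight ν) :
    ∀ s ∈ Ico (0:ℝ) 1, 0 ≤ ω s * tl ν s := fun s hs =>
  mul_nonneg (hω.1 s hs) (tl_nonneg hν.1 hν.2.1 hs.1 hs.2.le)

lemma P_upper {ω ν : ℝ → ℝ} (hω : IsRadialWeight ω) (hν : IsRadialWeight ν) {r : ℝ}
    (hr : 0 ≤ r) (hr1 : r ≤ 1) :
    tl (fun s => ω s * tl ν s) r ≤ tl ω r * tl ν r := by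
  have h1 : (∫ s in r..1, ω s * tl ν s) ≤ ∫ s in r..1, ω s * tl ν r := by
    apply intervalIntegral.integral_mono_ae_restrict hr1
      (rw_ii (P_integrable hω hν) hr hr1 zero_le_one le_rfl)
      ((rw_ii hω.2.1 hr hr1 zero_le_one le_rfl).mul_const _)
    filter_upwards [ae_ne_one, ae_mem_Icc] with x hx hx2
    have hx1 : x < 1 := lt_of_le_of_ne hx2.2 hx
    have h3 : tl ν x ≤ tl ν r := tl_anti hν.1 hν.2.1 hr hx2.1 hx1.le
    exact mul_le_mul_of_nonneg_left h3 (hω.1 x ⟨le_trans hr hx2.1, hx1⟩)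
  calc tl (fun s => ω s * tl ν s) r ≤ ∫ s in r..1, ω s * tl ν r := h1
    _ = tl ω r * tl ν r := intervalIntegral.integral_mul_const _ _

lemma P_lower {ω ν : ℝ → ℝ} (hω : IsRadialWeight ω) (hν : IsRadialWeight ν) {r ρ : ℝ}
    (hr : 0 ≤ r) (hrρ : r ≤ ρ) (hρ1 : ρ ≤ 1) :
    (tl ω r - tl ω ρ) * tl ν ρ ≤ tl (fun s => ω s * tl ν s) r := by
  have hρ0 : 0 ≤ ρ := le_trans hr hrρ
  have hPi := P_integrable hω hν
  have hPn := P_nonneg hω hν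
  have hsplit := tl_split hPi hr hrρ hρ1
  have htail : 0 ≤ tl (fun s => ω s * tl ν s) ρ := tl_nonneg hPn hPi hρ0 hρ1
  have h1 : (∫ s in r..ρ, ω s * tl ν ρ) ≤ ∫ s in r..ρ, ω s * tl ν s := by
    apply intervalIntegral.integral_mono_ae_restrict hrρ
      ((rw_ii hω.2.1 hr (le_trans hrρ hρ1) hρ0 hρ1).mul_const _)
      (rw_ii hPi hr (le_trans hrρ hρ1) hρ0 hρ1)
    filter_upwards [ae_ne_one, ae_mem_Icc] with x hx hx2
    have hx0 : 0 ≤ x := le_trans hr hx2.1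
    have hx1 : x < 1 := lt_of_le_of_ne (le_trans hx2.2 hρ1) hx
    have h3 : tl ν ρ ≤ tl ν x := tl_anti hν.1 hν.2.1 hx0 hx2.2 hρ1
    exact mul_le_mul_of_nonneg_left h3 (hω.1 x ⟨hx0, hx1⟩)
  have h2 : (∫ s in r..ρ, ω s * tl ν ρ) = (tl ω r - tl ω ρ) * tl ν ρ := by
    rw [intervalIntegral.integral_mul_const]
    have := tl_split hω.2.1 hr hrρ hρ1
    rw [show (∫ s in r..ρ, ω s) = tl ω r - tl ω ρ by linarith]
  linarith

lemma mid_mem {r K : ℝ} (hr : 0 ≤ r) (hr1 : r < 1) (hK : 1 ≤ K) :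
    r ≤ 1 - (1 - r)/K ∧ 1 - (1 - r)/K < 1 := by
  have hK0 : 0 < K := lt_of_lt_of_le one_pos hK
  constructor
  · have h : (1 - r)/K ≤ 1 - r := by rw [div_le_iff₀ hK0]; nlinarith
    linarith
  · have : 0 < (1 - r)/K := div_pos (by linarith) hK0
    linarith

lemma dhat_iter {ν : ℝ → ℝ} {C : ℝ} (hC1 : 1 ≤ C)
    (hC : ∀ r ∈ Ico (0:ℝ) 1, tl ν r ≤ C * tl ν ((1 + r)/2)) :
    ∀ m : ℕ, ∀ r ∈ Ico (0:ℝ) 1, tl ν r ≤ C ^ m * tl ν (1 - (1 - r)/2 ^ m) := by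
  intro m
  induction m with
  | zero => intro r hr; simp
  | succ m ih =>
    intro r hr
    set r' := 1 - (1 - r)/2 ^ m with hr'def
    have h2m : (1:ℝ) ≤ 2 ^ m := one_le_pow₀ (by norm_num)
    have hmem := mid_mem hr.1 hr.2 h2m
    have hr' : r' ∈ Ico (0:ℝ) 1 := ⟨le_trans hr.1 hmem.1, hmem.2⟩
    have h1 : tl ν r ≤ C ^ m * tl ν r' := ih r hr
    have h2 : tl ν r' ≤ C * tl ν ((1 + r')/2) := hC r' hr'
    have h3 : (1 + r')/2 = 1 - (1 - r)/2 ^ (m + 1) := by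
      rw [hr'def]; field_simp; ring
    calc tl ν r ≤ C ^ m * tl ν r' := h1
      _ ≤ C ^ m * (C * tl ν ((1 + r')/2)) :=
        mul_le_mul_of_nonneg_left h2 (pow_nonneg (by linarith) m)
      _ = C ^ (m + 1) * tl ν (1 - (1 - r)/2 ^ (m + 1)) := by rw [h3]; ring

lemma dcheck_iter {ω : ℝ → ℝ} {K C : ℝ} (hK : 1 < K) (hC0 : 0 ≤ C)
    (hC : ∀ r ∈ Ico (0:ℝ) 1, C * tl ω (1 - (1 - r)/K) ≤ tl ω r) :
    ∀ j : ℕ, ∀ r ∈ Ico (0:ℝ) 1, C ^ j * tl ω (1 - (1 - r)/K ^ j) ≤ tl ω r := by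
  intro j
  induction j with
  | zero => intro r hr; simp
  | succ j ih =>
    intro r hr
    set r' := 1 - (1 - r)/K ^ j with hr'def
    have hKj : (1:ℝ) ≤ K ^ j := one_le_pow₀ hK.le
    have hmem := mid_mem hr.1 hr.2 hKj
    have hr' : r' ∈ Ico (0:ℝ) 1 := ⟨le_trans hr.1 hmem.1, hmem.2⟩
    have h2 : C * tl ω (1 - (1 - r')/K) ≤ tl ω r' := hC r' hr'
    have h3 : 1 - (1 - r')/K = 1 - (1 - r)/K ^ (j + 1) := by
      rw [hr'def]
      have : K ^ j ≠ 0 := by positivity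
      field_simp; ring
    calc C ^ (j + 1) * tl ω (1 - (1 - r)/K ^ (j + 1))
        = C ^ j * (C * tl ω (1 - (1 - r')/K)) := by rw [← h3]; ring
      _ ≤ C ^ j * tl ω r' := mul_le_mul_of_nonneg_left h2 (pow_nonneg hC0 j)
      _ ≤ tl ω r := ih r hr

/-- Lemma 2.4: if `ω, ν ∈ D`, then `ω ν̂` is a radial weight in `D` and
`∫_r^1 ω(s) ν̂(s) ds ≍ ω̂(r) ν̂(r)`. -/
theorem stmt10 (ω ν : ℝ → ℝ) (hω : IsRadialWeight ω) (hν : IsRadialWeight ν)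
    (hωD : DD ω) (hνD : DD ν) :
    IsRadialWeight (fun s => ω s * tl ν s) ∧ DD (fun s => ω s * tl ν s) ∧
    ∃ c₁ c₂ : ℝ, 0 < c₁ ∧ c₁ ≤ c₂ ∧ ∀ r ∈ Ico (0:ℝ) 1,
      c₁ * (tl ω r * tl ν r) ≤ tl (fun s => ω s * tl ν s) r ∧
      tl (fun s => ω s * tl ν s) r ≤ c₂ * (tl ω r * tl ν r) := by
  obtain ⟨⟨Cω0, hCωhat0⟩, ⟨K, Cω, hK, hCω1, hCωcheck⟩⟩ := hωD
  obtain ⟨⟨Cν0, hCνhat0⟩, -⟩ := hνD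
  set P : ℝ → ℝ := fun s => ω s * tl ν s with hPdef
  -- midpoint membership
  have hmid : ∀ r ∈ Ico (0:ℝ) 1, (1 + r)/2 ∈ Ico (0:ℝ) 1 := by
    intro r hr
    constructor
    · linarith [hr.1]
    · linarith [hr.2]
  -- improved Dhat constants (≥ 1)
  set Cν := max Cν0 1 with hCνdef
  have hCν1 : 1 ≤ Cν := le_max_right _ _
  have hCνhat : ∀ r ∈ Ico (0:ℝ) 1, tl ν r ≤ Cν * tl ν ((1 + r)/2) := by
    intro r hr
    have h1 := hCνhat0 r hr
    have h2 : 0 ≤ tl ν ((1 + r)/2) := tl_nonneg hν.1 hν.2.1 (hmid r hr).1 (hmid r hr).2.le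
    nlinarith [le_max_left Cν0 1]
  set Cωm := max Cω0 1 with hCωmdef
  have hCωm1 : 1 ≤ Cωm := le_max_right _ _
  have hCωhat : ∀ r ∈ Ico (0:ℝ) 1, tl ω r ≤ Cωm * tl ω ((1 + r)/2) := by
    intro r hr
    have h1 := hCωhat0 r hr
    have h2 : 0 ≤ tl ω ((1 + r)/2) := tl_nonneg hω.1 hω.2.1 (hmid r hr).1 (hmid r hr).2.le
    nlinarith [le_max_left Cω0 1]
  -- choose n with 2 ≤ Cω^n, m with K^n ≤ 2^m
  obtain ⟨n, hn⟩ := pow_unbounded_of_one_lt (2:ℝ) hCω1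
  obtain ⟨m, hm⟩ := pow_unbounded_of_one_lt (K^n) (by norm_num : (1:ℝ) < 2)
  set c₁ : ℝ := 1/(2 * Cν^m) with hc₁def
  have hCνm : (1:ℝ) ≤ Cν^m := one_le_pow₀ hCν1
  have hc₁pos : 0 < c₁ := by rw [hc₁def]; positivity
  have hc₁le : c₁ ≤ 1 := by
    rw [hc₁def, div_le_one (by positivity)]; linarith
  -- the key lower bound
  have hlow : ∀ r ∈ Ico (0:ℝ) 1, c₁ * (tl ω r * tl ν r) ≤ tl P r := by
    intro r hr
    set ρ := 1 - (1 - r)/K^n with hρdef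
    set σ := 1 - (1 - r)/2^m with hσdef
    have hKn1 : (1:ℝ) ≤ K^n := one_le_pow₀ hK.le
    have h2m1 : (1:ℝ) ≤ 2^m := one_le_pow₀ (by norm_num)
    have hρmem := mid_mem hr.1 hr.2 hKn1
    have hσmem := mid_mem hr.1 hr.2 h2m1
    have hρ0 : 0 ≤ ρ := le_trans hr.1 hρmem.1
    have hρσ : ρ ≤ σ := by
      have : (1 - r)/2^m ≤ (1 - r)/K^n := by
        apply div_le_div_of_nonneg_left (by linarith [hr.2]) (by positivity) hm.le
      rw [hρdef, hσdef]; linarith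
    have h1 := dcheck_iter hK (by linarith : (0:ℝ) ≤ Cω) hCωcheck n r hr
    have h2 := dhat_iter hCν1 hCνhat m r hr
    have h4 : tl ν σ ≤ tl ν ρ := tl_anti hν.1 hν.2.1 hρ0 hρσ hσmem.2.le
    have h5 := P_lower hω hν hr.1 hρmem.1 hρmem.2.le
    have hωρ0 : 0 ≤ tl ω ρ := tl_nonneg hω.1 hω.2.1 hρ0 hρmem.2.le
    have hνρ0 : 0 ≤ tl ν ρ := tl_nonneg hν.1 hν.2.1 hρ0 hρmem.2.le
    have hνr0 : 0 ≤ tl ν r := tl_nonneg hν.1 hν.2.1 hr.1 hr.2.le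
    have hωr0 : 0 ≤ tl ω r := tl_nonneg hω.1 hω.2.1 hr.1 hr.2.le
    have hCωn2 : (2:ℝ) ≤ Cω^n := hn.le
    have h6 : tl ω r / 2 ≤ tl ω r - tl ω ρ := by nlinarith
    have h7 : tl ν r / Cν^m ≤ tl ν ρ := by
      rw [div_le_iff₀ (by positivity)]; nlinarith
    have h8 : (tl ω r / 2) * (tl ν r / Cν^m) ≤ (tl ω r - tl ω ρ) * tl ν ρ :=
      mul_le_mul h6 h7 (by positivity) (by linarith)
    have h9 : c₁ * (tl ω r * tl ν r) = (tl ω r / 2) * (tl ν r / Cν^m) := by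
      rw [hc₁def]; field_simp
    linarith
  have hupper : ∀ r ∈ Ico (0:ℝ) 1, tl P r ≤ tl ω r * tl ν r := fun r hr =>
    P_upper hω hν hr.1 hr.2.le
  have hPrw : IsRadialWeight P := by
    refine ⟨P_nonneg hω hν, P_integrable hω hν, fun r hr => ?_⟩
    have := hlow r hr
    have h1 := hω.2.2 r hr
    have h2 := hν.2.2 r hr
    linarith [mul_pos hc₁pos (mul_pos h1 h2)]
  refine ⟨hPrw, ⟨⟨Cωm * Cν / c₁, ?_⟩, ?_⟩, c₁, 1, hc₁pos, hc₁le, fun r hr =>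
    ⟨hlow r hr, by simpa using hupper r hr⟩⟩
  · -- Dhat P
    intro r hr
    have hmr := hmid r hr
    have h1 := hupper r hr
    have h2 := hCωhat r hr
    have h3 := hCνhat r hr
    have h4 := hlow _ hmr
    have hA : 0 ≤ tl ω ((1 + r)/2) := tl_nonneg hω.1 hω.2.1 hmr.1 hmr.2.le
    have hB : 0 ≤ tl ν ((1 + r)/2) := tl_nonneg hν.1 hν.2.1 hmr.1 hmr.2.le
    have hνr0 : 0 ≤ tl ν r := tl_nonneg hν.1 hν.2.1 hr.1 hr.2.le
    have hωr0 : 0 ≤ tl ω r := tl_nonneg hω.1 hω.2.1 hr.1 hr.2.le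
    have h5 : tl ω r * tl ν r ≤ (Cωm * tl ω ((1 + r)/2)) * (Cν * tl ν ((1 + r)/2)) :=
      mul_le_mul h2 h3 hνr0 (by nlinarith)
    have h6 : Cωm * Cν / c₁ * tl P ((1 + r)/2) ≥
        Cωm * Cν * (tl ω ((1 + r)/2) * tl ν ((1 + r)/2)) := by
      rw [ge_iff_le, ← sub_nonneg]
      have h7 : Cωm * Cν / c₁ * tl P ((1 + r)/2) - Cωm * Cν * (tl ω ((1 + r)/2) * tl ν ((1 + r)/2))
          = (Cωm * Cν / c₁) * (tl P ((1 + r)/2) - c₁ * (tl ω ((1 + r)/2) * tl ν ((1 + r)/2))) := by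
        field_simp
      rw [h7]
      apply mul_nonneg (by positivity) (by linarith)
    calc tl P r ≤ tl ω r * tl ν r := h1
      _ ≤ (Cωm * tl ω ((1 + r)/2)) * (Cν * tl ν ((1 + r)/2)) := h5
      _ = Cωm * Cν * (tl ω ((1 + r)/2) * tl ν ((1 + r)/2)) := by ring
      _ ≤ Cωm * Cν / c₁ * tl P ((1 + r)/2) := h6
  · -- Dcheck P
    obtain ⟨j, hj⟩ := pow_unbounded_of_one_lt (1/c₁) hCω1
    refine ⟨K^(j+1), c₁ * Cω^(j+1), one_lt_pow₀ hK (Nat.succ_ne_zero j), ?_, ?_⟩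
    · have h1 : 1/c₁ < Cω^(j+1) := lt_of_lt_of_le hj (pow_le_pow_right₀ hCω1.le (by omega))
      rw [div_lt_iff₀ hc₁pos] at h1
      nlinarith
    · intro r hr
      set ρ := 1 - (1 - r)/K^(j+1) with hρdef
      have hKj1 : (1:ℝ) ≤ K^(j+1) := one_le_pow₀ hK.le
      have hρmem := mid_mem hr.1 hr.2 hKj1
      have hρ0 : 0 ≤ ρ := le_trans hr.1 hρmem.1
      have h1 : tl P ρ ≤ tl ω ρ * tl ν ρ := P_upper hω hν hρ0 hρmem.2.le
      have h2 := dcheck_iter hK (by linarith : (0:ℝ) ≤ Cω) hCωcheck (j+1) r hr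
      have h3 : tl ν ρ ≤ tl ν r := tl_anti hν.1 hν.2.1 hr.1 hρmem.1 hρmem.2.le
      have h4 := hlow r hr
      have hωρ0 : 0 ≤ tl ω ρ := tl_nonneg hω.1 hω.2.1 hρ0 hρmem.2.le
      have hνρ0 : 0 ≤ tl ν ρ := tl_nonneg hν.1 hν.2.1 hρ0 hρmem.2.le
      have hωr0 : 0 ≤ tl ω r := tl_nonneg hω.1 hω.2.1 hr.1 hr.2.le
      have hCωj0 : (0:ℝ) < Cω^(j+1) := by positivity
      calc c₁ * Cω^(j+1) * tl P ρ ≤ c₁ * Cω^(j+1) * (tl ω ρ * tl ν ρ) :=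
          mul_le_mul_of_nonneg_left h1 (by positivity)
        _ = c₁ * ((Cω^(j+1) * tl ω ρ) * tl ν ρ) := by ring
        _ ≤ c₁ * (tl ω r * tl ν ρ) :=
          mul_le_mul_of_nonneg_left (mul_le_mul_of_nonneg_right h2 hνρ0) hc₁pos.le
        _ ≤ c₁ * (tl ω r * tl ν r) :=
          mul_le_mul_of_nonneg_left (mul_le_mul_of_nonneg_left h3 hωr0) hc₁pos.le
        _ ≤ tl P r := h4
end
end

section
/- Let ω and ν be radial weights such that P_ω : L^∞_ν̂ → B^∞_ν̂ is bounded. Then there exists a constant C = C(ω,ν) > 0 such that (ω/ν̂)_x ≤ C · ω_{2x} / ν̂(1 − 1/x) for all x ≥ 1. -/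
open MeasureTheory Set Complex
open scoped ENNReal

noncomputable section

/-
Test the boundedness of `P_ω` on `f_m(ζ) = (ζ/|ζ|)^m / ν̂(|ζ|)`, which lies in the unit ball of
`L^∞_ν̂`. Since the monomials `ζ^n` are orthogonal on every circle,
`P_ω f_m(z) = ((ω/ν̂)_{m+1} / ω_{2m+1}) z^m`, and the Bloch-type bound at `r = 1 - 1/m`, where
`(1 - r) m r^{m-1} ≥ 1/3`, yields `(ω/ν̂)_{m+1} ν̂(1 - 1/m) ≲ ω_{2m+1}`. For real `x ≥ 1` take
`m = ⌊x⌋`: splitting the moments at `1/2` gives `(ω/ν̂)_x ≲ (ω/ν̂)_{m+1} + 2^{-x}` and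
`ω_{2m+1} ≲ ω_{2x} + 2^{-x}`, and `2^{-x} ≲ ω_{2x}` because `ω_{2x} ≥ (3/4)^{2x} ω̂(3/4)`.
-/

open Real
open scoped ComplexConjugate

lemma inv_three_le_one_sub_one_div_pow {m : ℕ} (hm : 1 ≤ m) : (3:ℝ)⁻¹ ≤ (1 - 1 / m) ^ (m - 1) := by
  obtain ⟨n, rfl⟩ := Nat.exists_eq_add_of_le' hm
  have hprod : (1 - 1 / ((n + 1 : ℕ) : ℝ)) ^ n * (1 + (n : ℝ)⁻¹) ^ n = 1 := by
    rcases n.eq_zero_or_pos with rfl | hn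
    · simp
    rw [← mul_pow]
    have : (n : ℝ) ≠ 0 := by positivity
    push_cast
    field_simp
    simp [add_sub_cancel_right, div_self this]
  have hexp : (1 + (n : ℝ)⁻¹) ^ n ≤ 3 := one_add_inv_pow_le_exp.trans exp_one_lt_three.le
  rw [Nat.add_sub_cancel, eq_inv_of_mul_eq_one_left hprod]
  exact inv_anti₀ (by positivity) hexp

lemma one_sub_one_div_mem_Ico {x : ℝ} (hx : 1 ≤ x) : 1 - 1 / x ∈ Ico (0:ℝ) 1 :=
  ⟨sub_nonneg.2 ((div_le_one (by linarith)).2 hx), sub_lt_self 1 (by positivity)⟩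

lemma integral_rpow_mul_nonneg {μ : ℝ → ℝ} (hμ : ∀ s ∈ Ioo (0:ℝ) 1, 0 ≤ μ s) {a b : ℝ}
    (ha : 0 ≤ a) (hab : a ≤ b) (hb : b ≤ 1) (y : ℝ) : 0 ≤ ∫ s in a..b, s ^ y * μ s := by
  rw [intervalIntegral.integral_of_le hab, integral_Ioc_eq_integral_Ioo]
  exact setIntegral_nonneg measurableSet_Ioo fun s hs =>
    mul_nonneg (rpow_nonneg (ha.trans hs.1.le) y) (hμ s ⟨ha.trans_lt hs.1, hs.2.trans_le hb⟩)

lemma mom_nonneg {μ : ℝ → ℝ} (hμ : ∀ s ∈ Ioo (0:ℝ) 1, 0 ≤ μ s) (y : ℝ) : 0 ≤ mom μ y :=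
  integral_rpow_mul_nonneg hμ le_rfl zero_le_one le_rfl y

lemma integral_add_integral_eq_mom {μ : ℝ → ℝ} {y ρ : ℝ}
    (h : IntervalIntegrable (fun s => s ^ y * μ s) volume 0 1) (hρ : ρ ∈ Icc (0:ℝ) 1) :
    (∫ s in (0:ℝ)..ρ, s ^ y * μ s) + (∫ s in ρ..1, s ^ y * μ s) = mom μ y := by
  rw [← uIcc_of_le zero_le_one] at hρ
  exact intervalIntegral.integral_add_adjacent_intervals (h.mono_set (uIcc_subset_uIcc_left hρ))
    (h.mono_set (uIcc_subset_uIcc_right hρ))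

lemma IntervalIntegrable.rpow_mul_of_le {μ : ℝ → ℝ} {a b : ℝ}
    (h : IntervalIntegrable (fun s => s ^ a * μ s) volume 0 1) (hab : a ≤ b) :
    IntervalIntegrable (fun s => s ^ b * μ s) volume 0 1 := by
  refine (h.continuousOn_mul (g := fun s => s ^ (b - a))
    (continuousOn_id.rpow_const fun _ _ => Or.inr (sub_nonneg.2 hab))).congr fun _ hs => ?_
  rw [uIoc_of_le zero_le_one] at hs
  simp only [← mul_assoc, ← rpow_add hs.1, sub_add_cancel]

lemma mom_le_two_mul_mom_add {μ : ℝ → ℝ} {a b : ℝ} (hμ : ∀ s ∈ Ioo (0:ℝ) 1, 0 ≤ μ s)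
    (hb : 0 ≤ b) (hab : a ≤ b + 1)
    (hμb : IntervalIntegrable (fun s => s ^ b * μ s) volume 0 1)
    (hμa : IntervalIntegrable (fun s => s ^ a * μ s) volume 0 1)
    (hμ0 : IntervalIntegrable μ volume 0 (1 / 2)) :
    mom μ b ≤ 2 * mom μ a + (1 / 2) ^ b * ∫ s in (0:ℝ)..1 / 2, μ s := by
  have hhalf : (1 / 2 : ℝ) ∈ Icc 0 1 := ⟨by norm_num, by norm_num⟩
  have hsub₁ : uIcc (0:ℝ) (1 / 2) ⊆ uIcc 0 1 := uIcc_subset_uIcc_left (by norm_num)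
  have hsub₂ : uIcc (1 / 2 : ℝ) 1 ⊆ uIcc 0 1 := uIcc_subset_uIcc_right (by norm_num)
  -- on `(0, 1/2)` use `s ^ b ≤ (1/2) ^ b`, on `(1/2, 1)` use `s ^ b ≤ s ^ (a - 1) ≤ 2 s ^ a`
  have hhead : (∫ s in (0:ℝ)..1 / 2, s ^ b * μ s) ≤ (1 / 2) ^ b * ∫ s in (0:ℝ)..1 / 2, μ s := by
    rw [← intervalIntegral.integral_const_mul]
    refine intervalIntegral.integral_mono_on_of_le_Ioo (by norm_num) (hμb.mono_set hsub₁)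
      (hμ0.const_mul _) fun s hs => ?_
    exact mul_le_mul_of_nonneg_right (rpow_le_rpow hs.1.le hs.2.le hb)
      (hμ s ⟨hs.1, hs.2.trans (by norm_num)⟩)
  have htail : (∫ s in (1 / 2 : ℝ)..1, s ^ b * μ s) ≤ 2 * ∫ s in (1 / 2 : ℝ)..1, s ^ a * μ s := by
    rw [← intervalIntegral.integral_const_mul]
    refine intervalIntegral.integral_mono_on_of_le_Ioo (by norm_num) (hμb.mono_set hsub₂)
      ((hμa.mono_set hsub₂).const_mul _) fun s hs => ?_
    have hs0 : 0 < s := lt_trans (by norm_num) hs.1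
    have hpow : s ^ b ≤ 2 * s ^ a := by
      have : s ^ (b + 1) ≤ s ^ a := rpow_le_rpow_of_exponent_ge hs0 hs.2.le hab
      rw [rpow_add_one hs0.ne'] at this
      nlinarith [rpow_nonneg hs0.le b, hs.1]
    rw [← mul_assoc]
    exact mul_le_mul_of_nonneg_right hpow (hμ s ⟨hs0, hs.2⟩)
  linarith [integral_add_integral_eq_mom hμa hhalf, integral_add_integral_eq_mom hμb hhalf,
    integral_rpow_mul_nonneg hμ le_rfl (by norm_num) (by norm_num : (1 / 2 : ℝ) ≤ 1) a]

namespace IsRadialWeight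

variable {ω : ℝ → ℝ}

lemma nonneg_on_Ioo (hω : IsRadialWeight ω) : ∀ s ∈ Ioo (0:ℝ) 1, 0 ≤ ω s :=
  fun s hs => hω.1 s ⟨hs.1.le, hs.2⟩

lemma intervalIntegrable (hω : IsRadialWeight ω) {a b : ℝ} (ha : 0 ≤ a) (hab : a ≤ b)
    (hb : b ≤ 1) : IntervalIntegrable ω volume a b := by
  rw [intervalIntegrable_iff_integrableOn_Ioo_of_le hab]
  exact hω.2.1.mono_set fun s hs => ⟨ha.trans hs.1.le, hs.2.trans_le hb⟩

lemma intervalIntegrable_rpow_mul (hω : IsRadialWeight ω) {y : ℝ} (hy : 0 ≤ y) :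
    IntervalIntegrable (fun s => s ^ y * ω s) volume 0 1 :=
  (hω.intervalIntegrable le_rfl zero_le_one le_rfl).continuousOn_mul
    (continuousOn_id.rpow_const fun _ _ => Or.inr hy)

lemma tl_pos (hω : IsRadialWeight ω) {r : ℝ} (h0 : 0 ≤ r) (h1 : r < 1) : 0 < tl ω r :=
  hω.2.2 r ⟨h0, h1⟩

lemma integral_add_tl (hω : IsRadialWeight ω) {a b : ℝ} (ha : 0 ≤ a) (hab : a ≤ b) (hb : b ≤ 1) :
    (∫ s in a..b, ω s) + tl ω b = tl ω a :=
  intervalIntegral.integral_add_adjacent_intervals (hω.intervalIntegrable ha hab hb)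
    (hω.intervalIntegrable (ha.trans hab) hb le_rfl)

lemma integral_nonneg (hω : IsRadialWeight ω) {a b : ℝ} (ha : 0 ≤ a) (hab : a ≤ b) (hb : b ≤ 1) :
    0 ≤ ∫ s in a..b, ω s := by
  simpa using integral_rpow_mul_nonneg hω.nonneg_on_Ioo ha hab hb 0

lemma tl_antitoneOn (hω : IsRadialWeight ω) : AntitoneOn (tl ω) (Icc 0 1) := fun a ha b hb hab => by
  linarith [hω.integral_add_tl ha.1 hab hb.2, hω.integral_nonneg ha.1 hab hb.2]

lemma integral_le_tl_zero (hω : IsRadialWeight ω) {b : ℝ} (hb0 : 0 ≤ b) (hb1 : b < 1) :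
    ∫ s in (0:ℝ)..b, ω s ≤ tl ω 0 := by
  linarith [hω.integral_add_tl le_rfl hb0 hb1.le, hω.tl_pos hb0 hb1]

lemma continuousOn_tl (hω : IsRadialWeight ω) : ContinuousOn (tl ω) (Icc 0 1) := by
  have h := intervalIntegral.continuousOn_primitive_interval'
    (hω.intervalIntegrable le_rfl zero_le_one le_rfl) (b₁ := 0) (b₂ := 1) (a := 1)
    (by simp)
  rw [uIcc_of_le zero_le_one] at h
  exact h.neg.congr fun r _ => intervalIntegral.integral_symm 1 r

lemma rpow_mul_tl_le_mom (hω : IsRadialWeight ω) {ρ y : ℝ} (h0 : 0 ≤ ρ) (h1 : ρ ≤ 1)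
    (hy : 0 ≤ y) : ρ ^ y * tl ω ρ ≤ mom ω y := by
  have hI := hω.intervalIntegrable_rpow_mul hy
  have htail : ρ ^ y * tl ω ρ ≤ ∫ s in ρ..1, s ^ y * ω s := by
    rw [tl, ← intervalIntegral.integral_const_mul]
    refine intervalIntegral.integral_mono_on_of_le_Ioo h1
      ((hω.intervalIntegrable h0 h1 le_rfl).const_mul _)
      (hI.mono_set (uIcc_subset_uIcc_right (by simp [uIcc_of_le, h0, h1]))) fun s hs => ?_
    exact mul_le_mul_of_nonneg_right (rpow_le_rpow h0 hs.1.le hy)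
      (hω.nonneg_on_Ioo s ⟨h0.trans_lt hs.1, hs.2⟩)
  linarith [integral_add_integral_eq_mom hI ⟨h0, h1⟩,
    integral_rpow_mul_nonneg hω.nonneg_on_Ioo le_rfl h0 h1 y]

lemma mom_pos (hω : IsRadialWeight ω) {y : ℝ} (hy : 0 ≤ y) : 0 < mom ω y :=
  (mul_pos (rpow_pos_of_pos one_half_pos y) (hω.tl_pos (by norm_num) (by norm_num))).trans_le
    (hω.rpow_mul_tl_le_mom (by norm_num) (by norm_num) hy)

lemma summable_pow_mul_inv_mom (hω : IsRadialWeight ω) {t : ℝ} (h0 : 0 ≤ t) (h1 : t < 1) :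
    Summable fun n : ℕ => t ^ n * (2 * mom ω (2 * n + 1))⁻¹ := by
  obtain ⟨ρ, hρ⟩ : ∃ ρ : ℝ, ρ = (1 + t) / 2 := ⟨_, rfl⟩
  have hρ0 : 0 < ρ := by rw [hρ]; positivity
  have hρ1 : ρ < 1 := by linarith
  have htρ : t / ρ ^ 2 < 1 := by
    rw [div_lt_one (by positivity), hρ]
    nlinarith [sq_pos_of_pos (sub_pos.2 h1)]
  have htl := hω.tl_pos hρ0.le hρ1
  refine Summable.of_nonneg_of_le (fun n => ?_) (fun n => ?_)
    ((summable_geometric_of_lt_one (by positivity) htρ).mul_right (2 * ρ * tl ω ρ)⁻¹)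
  · have := hω.mom_pos (y := 2 * n + 1) (by positivity)
    positivity
  · have hmom : ρ ^ (2 * n + 1) * tl ω ρ ≤ mom ω (2 * n + 1) := by
      simpa [← rpow_natCast] using
        hω.rpow_mul_tl_le_mom hρ0.le hρ1.le (y := 2 * n + 1) (by positivity)
    calc t ^ n * (2 * mom ω (2 * n + 1))⁻¹ ≤ t ^ n * (2 * (ρ ^ (2 * n + 1) * tl ω ρ))⁻¹ := by
          gcongr
      _ = (t / ρ ^ 2) ^ n * (2 * ρ * tl ω ρ)⁻¹ := by
          rw [div_pow, ← pow_mul, pow_succ]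
          field_simp

lemma div_tl_nonneg {ν : ℝ → ℝ} (hω : IsRadialWeight ω) (hν : IsRadialWeight ν) :
    ∀ s ∈ Ioo (0:ℝ) 1, 0 ≤ ω s / tl ν s :=
  fun s hs => div_nonneg (hω.nonneg_on_Ioo s hs) (hν.tl_pos hs.1.le hs.2).le

lemma half_rpow_mul_tl_le_mom (hω : IsRadialWeight ω) {x : ℝ} (hx : 0 ≤ x) :
    (1 / 2) ^ x * tl ω (3 / 4) ≤ mom ω (2 * x) := by
  refine le_trans ?_
    (hω.rpow_mul_tl_le_mom (ρ := 3 / 4) (by norm_num) (by norm_num) (by positivity))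
  rw [rpow_mul (by norm_num)]
  gcongr
  · exact (hω.tl_pos (by norm_num) (by norm_num)).le
  · norm_num

lemma mom_two_mul_add_one_le (hω : IsRadialWeight ω) {x : ℝ} {m : ℕ} (hx : 0 ≤ x)
    (hxm : x ≤ m + 1) : mom ω (2 * m + 1) ≤ 2 * mom ω (2 * x) + (1 / 2) ^ x * tl ω 0 := by
  have h := _root_.mom_le_two_mul_mom_add hω.nonneg_on_Ioo
    (by positivity : (0:ℝ) ≤ 2 * m + 1) (by linarith : 2 * x ≤ 2 * m + 1 + 1)
    (hω.intervalIntegrable_rpow_mul (by positivity))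
    (hω.intervalIntegrable_rpow_mul (by positivity))
    (hω.intervalIntegrable le_rfl (by norm_num) (by norm_num))
  have hhead := hω.integral_le_tl_zero (b := 1 / 2) (by norm_num) (by norm_num)
  have hhead_nonneg := hω.integral_nonneg le_rfl (b := 1 / 2) (by norm_num) (by norm_num)
  have hpow : ((1:ℝ) / 2) ^ (2 * (m : ℝ) + 1) ≤ (1 / 2) ^ x :=
    rpow_le_rpow_of_exponent_ge (by norm_num) (by norm_num) (by linarith)
  exact h.trans (by gcongr)

lemma mom_div_tl_le {ν : ℝ → ℝ} (hω : IsRadialWeight ω) (hν : IsRadialWeight ν) {x : ℝ}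
    {m : ℕ} (hmx : m ≤ x) (hxm : x ≤ m + 1)
    (hI : IntervalIntegrable (fun s => s ^ x * (ω s / tl ν s)) volume 0 1) :
    mom (fun s => ω s / tl ν s) x ≤
      2 * mom (fun s => ω s / tl ν s) (m + 1) + (1 / 2) ^ x * (tl ω 0 / tl ν (1 / 2)) := by
  have hhalf : 0 < tl ν (1 / 2) := hν.tl_pos (by norm_num) (by norm_num)
  have hIω : IntervalIntegrable ω volume 0 (1 / 2) :=
    hω.intervalIntegrable le_rfl (by norm_num) (by norm_num)
  have hcont : ContinuousOn (fun s => (tl ν s)⁻¹) (uIcc 0 (1 / 2)) := by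
    rw [uIcc_of_le (by norm_num)]
    exact (hν.continuousOn_tl.mono (Icc_subset_Icc le_rfl (by norm_num))).inv₀
      fun s hs => (hν.tl_pos hs.1 (by linarith [hs.2])).ne'
  have hIμ : IntervalIntegrable (fun s => ω s / tl ν s) volume 0 (1 / 2) := by
    simpa only [div_eq_inv_mul] using hIω.continuousOn_mul hcont
  have h := _root_.mom_le_two_mul_mom_add (hω.div_tl_nonneg hν) (m.cast_nonneg.trans hmx)
    (by linarith) hI (hI.rpow_mul_of_le hxm) hIμ
  have hhead : ∫ s in (0:ℝ)..1 / 2, ω s / tl ν s ≤ tl ω 0 / tl ν (1 / 2) := by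
    calc ∫ s in (0:ℝ)..1 / 2, ω s / tl ν s ≤ ∫ s in (0:ℝ)..1 / 2, ω s / tl ν (1 / 2) := by
          refine intervalIntegral.integral_mono_on_of_le_Ioo (by norm_num) hIμ
            (hIω.div_const _) fun s hs => ?_
          have hs1 : s ∈ Ioo (0:ℝ) 1 := ⟨hs.1, hs.2.trans (by norm_num)⟩
          exact div_le_div_of_nonneg_left (hω.nonneg_on_Ioo s hs1) hhalf
            (hν.tl_antitoneOn ⟨hs.1.le, hs1.2.le⟩ ⟨by norm_num, by norm_num⟩ hs.2.le)
      _ ≤ tl ω 0 / tl ν (1 / 2) := by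
          rw [intervalIntegral.integral_div]
          gcongr
          exact hω.integral_le_tl_zero (by norm_num) (by norm_num)
  exact h.trans (by gcongr)

end IsRadialWeight

lemma mem_unitDisc_iff {ζ : ℂ} : ζ ∈ unitDisc ↔ ‖ζ‖ < 1 := mem_ball_zero_iff

lemma measurableSet_unitDisc : MeasurableSet unitDisc := measurableSet_ball

lemma mom_eq_integral_Ioo_pow (g : ℝ → ℝ) (k : ℕ) :
    mom g k = ∫ s in Ioo (0:ℝ) 1, s ^ k * g s := by
  simp only [mom, intervalIntegral.integral_of_le zero_le_one, integral_Ioc_eq_integral_Ioo,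
    rpow_natCast]

lemma integral_Ioo_exp_int_mul_I {k : ℤ} (hk : k ≠ 0) :
    ∫ θ in Ioo (-π) π, Complex.exp (k * I * θ) = 0 := by
  have hc : (k : ℂ) * I ≠ 0 := mul_ne_zero (Int.cast_ne_zero.2 hk) I_ne_zero
  rw [← integral_Ioc_eq_integral_Ioo, ← intervalIntegral.integral_of_le (by linarith [pi_pos]),
    integral_exp_mul_complex hc, div_eq_zero_iff, sub_eq_zero, Complex.exp_eq_exp_iff_exists_int]
  exact Or.inl ⟨k, by push_cast; ring⟩

lemma integral_unitDisc_pow_mul_conj_pow (g : ℝ → ℝ) (m n : ℕ) :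
    ∫ ζ in unitDisc, ζ ^ m * (g ‖ζ‖ : ℂ) * conj ζ ^ n =
      if n = m then ((2 * π * mom g (2 * m + 1) : ℝ) : ℂ) else 0 := by
  set S : Set (ℝ × ℝ) := Ioo (0:ℝ) 1 ×ˢ Ioo (-π) π
  set F₁ : ℝ → ℂ := fun s => ((s ^ (m + n + 1) * g s : ℝ) : ℂ)
  set F₂ : ℝ → ℂ := fun θ => Complex.exp (((m - n : ℤ) : ℂ) * I * θ)
  have hpolar : ∀ p ∈ polarCoord.target, p.1 • unitDisc.indicator
      (fun ζ => ζ ^ m * (g ‖ζ‖ : ℂ) * conj ζ ^ n) (Complex.polarCoord.symm p) =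
        S.indicator (fun p => F₁ p.1 * F₂ p.2) p := by
    rintro ⟨s, θ⟩ ⟨hs, hθ⟩
    have hs : 0 < s := hs
    have hζ : Complex.polarCoord.symm (s, θ) = s * Complex.exp (θ * I) := by
      rw [Complex.polarCoord_symm_apply, Complex.exp_mul_I]
      push_cast
      ring
    have hnorm : ‖Complex.polarCoord.symm (s, θ)‖ = s := by
      rw [Complex.norm_polarCoord_symm, abs_of_pos hs]
    have hconj : conj (Complex.exp (θ * I)) = Complex.exp (-(θ * I)) := by
      rw [← Complex.exp_conj, map_mul, Complex.conj_ofReal, Complex.conj_I, mul_neg]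
    have hF₂ : F₂ θ = Complex.exp (θ * I) ^ m * Complex.exp (-(θ * I)) ^ n := by
      simp only [F₂, ← Complex.exp_nat_mul, ← Complex.exp_add]
      push_cast
      ring_nf
    by_cases hs1 : s < 1
    · rw [indicator_of_mem (mem_unitDisc_iff.2 (by rwa [hnorm])),
        indicator_of_mem (show (s, θ) ∈ S from ⟨⟨hs, hs1⟩, hθ⟩), hnorm, hζ, hF₂]
      simp only [F₁, map_mul, Complex.conj_ofReal, hconj, Complex.real_smul]
      push_cast
      ring
    · rw [indicator_of_notMem (fun h => hs1 (by rwa [mem_unitDisc_iff, hnorm] at h)),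
        indicator_of_notMem (fun h : (s, θ) ∈ S => hs1 h.1.2), smul_zero]
  have hprod : ∫ ζ in unitDisc, ζ ^ m * (g ‖ζ‖ : ℂ) * conj ζ ^ n =
      (∫ s in Ioo (0:ℝ) 1, F₁ s) * ∫ θ in Ioo (-π) π, F₂ θ := by
    rw [← integral_indicator measurableSet_unitDisc, ← Complex.integral_comp_polarCoord_symm,
      setIntegral_congr_fun polarCoord.open_target.measurableSet hpolar,
      setIntegral_indicator (measurableSet_Ioo.prod measurableSet_Ioo), polarCoord_target,
      inter_eq_right.2 (prod_mono Ioo_subset_Ioi_self subset_rfl), Measure.volume_eq_prod,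
      setIntegral_prod_mul]
  rw [hprod]
  split_ifs with hnm
  · subst hnm
    have hrad : ∫ s in Ioo (0:ℝ) 1, F₁ s = (mom g (2 * n + 1) : ℂ) := by
      rw [show ∫ s in Ioo (0:ℝ) 1, F₁ s = ((∫ s in Ioo (0:ℝ) 1, s ^ (n + n + 1) * g s : ℝ) : ℂ)
        from integral_ofReal, show 2 * (n : ℝ) + 1 = ((2 * n + 1 : ℕ) : ℝ) by push_cast; ring,
        mom_eq_integral_Ioo_pow, show n + n + 1 = 2 * n + 1 by ring]
    have hang : ∫ θ in Ioo (-π) π, F₂ θ = 2 * π := by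
      simp only [F₂, sub_self, Int.cast_zero, zero_mul, Complex.exp_zero, setIntegral_const,
        Real.volume_real_Ioo_of_le (by linarith [pi_pos] : -π ≤ π), Complex.real_smul, mul_one]
      push_cast
      ring
    rw [hrad, hang]
    push_cast
    ring
  · rw [integral_Ioo_exp_int_mul_I (sub_ne_zero.2 (by exact_mod_cast Ne.symm hnm)), mul_zero]

section Projection

variable {ω : ℝ → ℝ} {f : ℂ → ℂ}

lemma bKer_zero_left (ω : ℝ → ℝ) (ζ : ℂ) : bKer ω 0 ζ = ((2 * mom ω 1 : ℝ) : ℂ)⁻¹ := by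
  rw [bKer, tsum_eq_single 0 fun n hn => by rw [map_zero, zero_mul, zero_pow hn, zero_div]]
  norm_num

lemma integrableOn_mul_weight_of_bInt_zero (hω : IsRadialWeight ω)
    (hf : IntegrableOn (bInt ω f 0) unitDisc) :
    IntegrableOn (fun ζ => f ζ * ω ‖ζ‖) unitDisc := by
  have hmom : ((2 * mom ω 1 : ℝ) : ℂ) ≠ 0 := by
    have := hω.mom_pos zero_le_one
    exact_mod_cast (by positivity : 2 * mom ω 1 ≠ 0)
  refine IntegrableOn.congr_fun (hf.const_mul ((2 * mom ω 1 : ℝ) : ℂ)) (fun ζ _ => ?_)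
    measurableSet_unitDisc
  rw [bInt, bKer_zero_left, map_inv₀, Complex.conj_ofReal]
  field_simp

lemma bProj_eq_tsum (hω : IsRadialWeight ω) (hf : IntegrableOn (fun ζ => f ζ * ω ‖ζ‖) unitDisc)
    {z : ℂ} (hz : z ∈ unitDisc) :
    bProj ω f z = (π : ℂ)⁻¹ * ∑' n : ℕ, z ^ n * ((2 * mom ω (2 * n + 1) : ℝ) : ℂ)⁻¹ *
      ∫ ζ in unitDisc, f ζ * ω ‖ζ‖ * conj ζ ^ n := by
  set c : ℕ → ℝ := fun n => (2 * mom ω (2 * n + 1))⁻¹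
  set T : ℕ → ℂ → ℂ := fun n ζ => z ^ n * (c n : ℂ) * (f ζ * ω ‖ζ‖ * conj ζ ^ n)
  have hc : ∀ n, 0 ≤ c n := fun n => by
    have := hω.mom_pos (y := 2 * n + 1) (by positivity)
    positivity
  have hexpand : ∀ ζ, bInt ω f z ζ = ∑' n, T n ζ := fun ζ => by
    simp only [bInt, bKer, Complex.conj_tsum, map_div₀, map_pow, map_mul, Complex.conj_conj,
      Complex.conj_ofReal, T, c, ← tsum_mul_left, ← tsum_mul_right]
    refine tsum_congr fun n => ?_
    push_cast
    ring
  have hbound : ∀ n, ∀ ζ ∈ unitDisc, ‖T n ζ‖ ≤ ‖z‖ ^ n * c n * ‖f ζ * ω ‖ζ‖‖ := fun n ζ hζ => by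
    have hζ1 : ‖ζ‖ ^ n ≤ 1 := pow_le_one₀ (norm_nonneg ζ) (mem_unitDisc_iff.1 hζ).le
    simp only [T, norm_mul, norm_pow, Complex.norm_real, Complex.norm_conj,
      Real.norm_of_nonneg (hc n)]
    exact mul_le_mul_of_nonneg_left (mul_le_of_le_one_right (by positivity) hζ1)
      (mul_nonneg (pow_nonneg (norm_nonneg z) n) (hc n))
  have hint : ∀ n, IntegrableOn (T n) unitDisc := fun n =>
    ((hf.mul_bdd (c := 1) ((continuous_conj.pow n).aestronglyMeasurable)
      ((ae_restrict_iff' measurableSet_unitDisc).2 (ae_of_all _ fun ζ hζ => by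
        simpa using pow_le_one₀ (norm_nonneg ζ) (mem_unitDisc_iff.1 hζ).le))).const_mul _)
  have hsum : Summable fun n => ∫ ζ in unitDisc, ‖T n ζ‖ := by
    refine Summable.of_nonneg_of_le (fun n => integral_nonneg fun _ => norm_nonneg _)
      (fun n => ?_) ((hω.summable_pow_mul_inv_mom (norm_nonneg z)
        (mem_unitDisc_iff.1 hz)).mul_right (∫ ζ in unitDisc, ‖f ζ * ω ‖ζ‖‖))
    rw [← integral_const_mul]
    exact setIntegral_mono_on (hint n).norm (hf.norm.const_mul _) measurableSet_unitDisc
      (hbound n)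
  rw [bProj, funext hexpand, ← integral_tsum_of_summable_integral_norm hint hsum]
  simp only [T, integral_const_mul, c]
  push_cast
  rfl

lemma bProj_pow_mul_radial (hω : IsRadialWeight ω) (g : ℝ → ℝ) (m : ℕ)
    (hf : IntegrableOn (fun ζ => ζ ^ m * (g ‖ζ‖ : ℂ) * ω ‖ζ‖) unitDisc) {z : ℂ}
    (hz : z ∈ unitDisc) :
    bProj ω (fun ζ => ζ ^ m * (g ‖ζ‖ : ℂ)) z =
      ((mom (fun s => g s * ω s) (2 * m + 1) / mom ω (2 * m + 1) : ℝ) : ℂ) * z ^ m := by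
  have hcoeff : ∀ n : ℕ, ∫ ζ in unitDisc, ζ ^ m * (g ‖ζ‖ : ℂ) * ω ‖ζ‖ * conj ζ ^ n =
      if n = m then ((2 * π * mom (fun s => g s * ω s) (2 * m + 1) : ℝ) : ℂ) else 0 := fun n => by
    rw [← integral_unitDisc_pow_mul_conj_pow]
    push_cast
    ring_nf
  rw [bProj_eq_tsum hω hf hz, tsum_congr fun n => by rw [hcoeff], tsum_eq_single m fun n hn => by
    rw [if_neg hn, mul_zero], if_pos rfl]
  have := hω.mom_pos (y := 2 * m + 1) (by positivity)
  have hπ : (π : ℂ) ≠ 0 := Complex.ofReal_ne_zero.2 pi_ne_zero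
  push_cast
  field_simp

end Projection

lemma norm_mul_le_three_mul_of_norm_deriv_le {F : ℂ → ℂ} {v : ℝ → ℝ} {K : ℂ} {C : ℝ} {m : ℕ}
    (hm : 1 ≤ m) (hv : 0 ≤ v (1 - 1 / m)) (hF : EqOn F (fun z => K * z ^ m) unitDisc)
    (hbd : ∀ z ∈ unitDisc, (1 - ‖z‖) * v ‖z‖ * ‖deriv F z‖ ≤ C) :
    ‖K‖ * v (1 - 1 / m) ≤ 3 * C := by
  set r : ℝ := 1 - 1 / m
  obtain ⟨hr0, hr1⟩ : r ∈ Ico 0 1 := one_sub_one_div_mem_Ico (by exact_mod_cast hm)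
  have hnorm : ‖(r : ℂ)‖ = r := by rw [Complex.norm_real, Real.norm_of_nonneg hr0]
  have hr : (r : ℂ) ∈ unitDisc := mem_unitDisc_iff.2 (by rwa [hnorm])
  have hderiv : deriv F r = K * (m * (r : ℂ) ^ (m - 1)) := by
    rw [(hF.eventuallyEq_of_mem (Metric.isOpen_ball.mem_nhds hr)).deriv_eq,
      deriv_const_mul _ (differentiableAt_pow m), deriv_pow_field]
  have hb := hbd r hr
  rw [hnorm, hderiv, norm_mul, norm_mul, norm_pow, hnorm, Complex.norm_natCast,
    show 1 - r = 1 / m by ring] at hb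
  have hpow := inv_three_le_one_sub_one_div_pow hm
  have hKv : 0 ≤ ‖K‖ * v r := mul_nonneg (norm_nonneg K) hv
  have : ‖K‖ * v r * r ^ (m - 1) ≤ C := by
    convert hb using 1
    field_simp
  nlinarith

def testFn (ν : ℝ → ℝ) (m : ℕ) : ℂ → ℂ :=
  fun ζ => ζ ^ m * (((‖ζ‖ ^ m * tl ν ‖ζ‖)⁻¹ : ℝ) : ℂ)

section TestFunction

variable {ω ν : ℝ → ℝ}

lemma aestronglyMeasurable_testFn (hν : IsRadialWeight ν) (m : ℕ) :
    AEStronglyMeasurable (testFn ν m) (volume.restrict unitDisc) := by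
  have hcont : ContinuousOn (fun ζ : ℂ => ‖ζ‖ ^ m * tl ν ‖ζ‖) unitDisc :=
    (continuous_norm.continuousOn.pow m).mul (hν.continuousOn_tl.comp
      continuous_norm.continuousOn fun ζ hζ => ⟨norm_nonneg ζ, (mem_unitDisc_iff.1 hζ).le⟩)
  exact (continuous_pow m).aestronglyMeasurable.mul
    (Complex.measurable_ofReal.comp_aemeasurable
      (hcont.aemeasurable measurableSet_unitDisc).inv).aestronglyMeasurable

lemma wSup_testFn_le_one (hν : IsRadialWeight ν) (m : ℕ) : wSup (tl ν) (testFn ν m) ≤ 1 := by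
  refine essSup_le_of_ae_le _ ?_
  filter_upwards [ae_restrict_mem measurableSet_unitDisc] with ζ hζ
  have htl := hν.tl_pos (norm_nonneg ζ) (mem_unitDisc_iff.1 hζ)
  rw [← ENNReal.ofReal_one]
  refine ENNReal.ofReal_le_ofReal ?_
  rw [testFn, norm_mul, norm_pow, Complex.norm_real, Real.norm_of_nonneg (by positivity)]
  calc ‖ζ‖ ^ m * (‖ζ‖ ^ m * tl ν ‖ζ‖)⁻¹ * tl ν ‖ζ‖
      = (‖ζ‖ ^ m * tl ν ‖ζ‖) * (‖ζ‖ ^ m * tl ν ‖ζ‖)⁻¹ := by ring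
    _ ≤ 1 := mul_inv_le_one

lemma bProj_testFn (hω : IsRadialWeight ω) (m : ℕ)
    (hf : IntegrableOn (bInt ω (testFn ν m) 0) unitDisc) {z : ℂ} (hz : z ∈ unitDisc) :
    bProj ω (testFn ν m) z =
      ((mom (fun s => ω s / tl ν s) (m + 1) / mom ω (2 * m + 1) : ℝ) : ℂ) * z ^ m := by
  have hmom : mom (fun s => (s ^ m * tl ν s)⁻¹ * ω s) (2 * m + 1) =
      mom (fun s => ω s / tl ν s) (m + 1) := by
    refine intervalIntegral.integral_congr_ae (ae_of_all _ fun s hs => ?_)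
    rw [uIoc_of_le zero_le_one] at hs
    have hs0 : 0 < s := hs.1
    rw [show 2 * (m : ℝ) + 1 = (m + 1) + m by ring, rpow_add hs0, rpow_natCast]
    field_simp
  rw [← hmom]
  exact bProj_pow_mul_radial hω (fun s => (s ^ m * tl ν s)⁻¹) m
    (integrableOn_mul_weight_of_bInt_zero hω hf) hz

end TestFunction

lemma ProjBddB.exists_mom_div_tl_mul_tl_le {ω ν : ℝ → ℝ} (hω : IsRadialWeight ω)
    (hν : IsRadialWeight ν) (hb : ProjBddB ω (tl ν)) :
    ∃ C, 0 < C ∧ ∀ m : ℕ, 1 ≤ m →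
      mom (fun s => ω s / tl ν s) (m + 1) * tl ν (1 - 1 / m) ≤ C * mom ω (2 * m + 1) := by
  obtain ⟨C₀, hC₀, hP⟩ := hb
  refine ⟨3 * C₀, by positivity, fun m hm => ?_⟩
  obtain ⟨hint, -, hbloch⟩ := hP (testFn ν m) (aestronglyMeasurable_testFn hν m)
    ((wSup_testFn_le_one hν m).trans_lt ENNReal.one_lt_top)
  have hr := one_sub_one_div_mem_Ico (x := m) (by exact_mod_cast hm)
  have hbd : ∀ z ∈ unitDisc, (1 - ‖z‖) * tl ν ‖z‖ * ‖deriv (bProj ω (testFn ν m)) z‖ ≤ C₀ :=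
    fun z hz => (ENNReal.ofReal_le_ofReal_iff hC₀.le).1 <|
      (hbloch z hz).trans (mul_le_of_le_one_right' (wSup_testFn_le_one hν m))
  have hK := norm_mul_le_three_mul_of_norm_deriv_le hm (hν.tl_pos hr.1 hr.2).le
    (fun z hz => bProj_testFn hω m (hint 0 (mem_unitDisc_iff.2 (by simp))) hz) hbd
  have hωm := hω.mom_pos (y := 2 * m + 1) (by positivity)
  rw [Complex.norm_real, Real.norm_of_nonneg (div_nonneg (mom_nonneg (hω.div_tl_nonneg hν) _)
    hωm.le), div_mul_eq_mul_div, div_le_iff₀ hωm] at hK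
  linarith

lemma IsRadialWeight.mom_div_tl_mul_tl_le_of_nat {ω ν : ℝ → ℝ} (hω : IsRadialWeight ω)
    (hν : IsRadialWeight ν) {C₀ : ℝ} (hC₀ : 0 ≤ C₀)
    (h : ∀ m : ℕ, 1 ≤ m →
      mom (fun s => ω s / tl ν s) (m + 1) * tl ν (1 - 1 / m) ≤ C₀ * mom ω (2 * m + 1))
    {x : ℝ} (hx : 1 ≤ x) (hI : IntervalIntegrable (fun s => s ^ x * (ω s / tl ν s)) volume 0 1) :
    mom (fun s => ω s / tl ν s) x * tl ν (1 - 1 / x) ≤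
      (4 * C₀ + (2 * C₀ * tl ω 0 + tl ω 0 / tl ν (1 / 2) * tl ν 0) / tl ω (3 / 4)) *
        mom ω (2 * x) := by
  set B := 2 * C₀ * tl ω 0 + tl ω 0 / tl ν (1 / 2) * tl ν 0
  have hB : 0 ≤ B := by
    have := hν.tl_pos le_rfl zero_lt_one
    have := hν.tl_pos (r := 1 / 2) (by norm_num) (by norm_num)
    have := hω.tl_pos le_rfl zero_lt_one
    positivity
  have hx0 : 0 ≤ x := zero_le_one.trans hx
  have hrx := one_sub_one_div_mem_Ico hx
  set m := ⌊x⌋₊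
  have hm : 1 ≤ m := Nat.le_floor (by exact_mod_cast hx)
  have hmx : (m : ℝ) ≤ x := Nat.floor_le hx0
  have hxm : x ≤ m + 1 := (Nat.lt_floor_add_one x).le
  have hrm := one_sub_one_div_mem_Ico (x := m) (by exact_mod_cast hm)
  have htl_m : tl ν (1 - 1 / x) ≤ tl ν (1 - 1 / m) :=
    hν.tl_antitoneOn ⟨hrm.1, hrm.2.le⟩ ⟨hrx.1, hrx.2.le⟩
      (sub_le_sub_left (one_div_le_one_div_of_le (by exact_mod_cast hm) hmx) 1)
  have htl_0 : tl ν (1 - 1 / x) ≤ tl ν 0 :=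
    hν.tl_antitoneOn ⟨le_rfl, zero_le_one⟩ ⟨hrx.1, hrx.2.le⟩ hrx.1
  have hμ := hω.mom_div_tl_le hν hmx hxm hI
  have hωm := hω.mom_two_mul_add_one_le hx0 hxm
  have hhalf := (le_div_iff₀ (hω.tl_pos (by norm_num) (by norm_num))).2
    (hω.half_rpow_mul_tl_le_mom hx0)
  have hK := mom_nonneg (hω.div_tl_nonneg hν) (m + 1)
  have hp : (0:ℝ) ≤ (1 / 2) ^ x * (tl ω 0 / tl ν (1 / 2)) := by
    have := hν.tl_pos (r := 1 / 2) (by norm_num) (by norm_num)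
    have := hω.tl_pos le_rfl zero_lt_one
    positivity
  calc mom (fun s => ω s / tl ν s) x * tl ν (1 - 1 / x)
      ≤ 2 * (mom (fun s => ω s / tl ν s) (m + 1) * tl ν (1 - 1 / m)) +
          (1 / 2) ^ x * (tl ω 0 / tl ν (1 / 2)) * tl ν 0 := by
        nlinarith [mul_le_mul_of_nonneg_right hμ (hν.tl_pos hrx.1 hrx.2).le,
          mul_le_mul_of_nonneg_left htl_m hK, mul_le_mul_of_nonneg_left htl_0 hp]
    _ ≤ 4 * C₀ * mom ω (2 * x) + (1 / 2) ^ x * B := by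
        nlinarith [h m hm, mul_le_mul_of_nonneg_left hωm (by positivity : 0 ≤ 2 * C₀)]
    _ ≤ (4 * C₀ + B / tl ω (3 / 4)) * mom ω (2 * x) := by
        have hpB := mul_le_mul_of_nonneg_left hhalf hB
        rw [mul_div_assoc'] at hpB
        nlinarith [div_mul_eq_mul_div B (tl ω (3 / 4)) (mom ω (2 * x))]

/-- Proposition: if `P_ω : L^∞_ν̂ → B^∞_ν̂` is bounded, then
`(ω/ν̂)_x ≤ C ω_{2x} / ν̂(1 - 1/x)` for all `x ≥ 1`. -/
theorem stmt18 (ω ν : ℝ → ℝ) (hω : IsRadialWeight ω) (hν : IsRadialWeight ν)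
    (hb : ProjBddB ω (tl ν)) :
    ∃ C : ℝ, 0 < C ∧ ∀ x : ℝ, 1 ≤ x →
      mom (fun s => ω s / tl ν s) x ≤ C * mom ω (2 * x) / tl ν (1 - 1 / x) := by
  obtain ⟨C₀, hC₀, hnat⟩ := hb.exists_mom_div_tl_mul_tl_le hω hν
  have := hν.tl_pos le_rfl zero_lt_one
  have := hν.tl_pos (r := 1 / 2) (by norm_num) (by norm_num)
  have := hω.tl_pos le_rfl zero_lt_one
  have := hω.tl_pos (r := 3 / 4) (by norm_num) (by norm_num)
  refine ⟨4 * C₀ + (2 * C₀ * tl ω 0 + tl ω 0 / tl ν (1 / 2) * tl ν 0) / tl ω (3 / 4),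
    by positivity, fun x hx => ?_⟩
  have hrx := one_sub_one_div_mem_Ico hx
  have := hω.mom_pos (y := 2 * x) (by linarith)
  have htlx := hν.tl_pos hrx.1 hrx.2
  -- a divergent moment is `0` by the convention of the Bochner integral
  by_cases hI : IntervalIntegrable (fun s => s ^ x * (ω s / tl ν s)) volume 0 1
  · rw [le_div_iff₀ htlx]
    exact hω.mom_div_tl_mul_tl_le_of_nat hν hC₀.le hnat hx hI
  · rw [mom, intervalIntegral.integral_undef hI]
    positivity
end
end
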